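/- Let A be a commutative noetherian ring, M a finitely generated A-module, F a finitely generated free A-module, and φ: M → F an A-linear map. Then φ is versal if and only if for every finitely generated A-module P, the map Hom_A(M*, P) → Hom_A(F*, P) given by precomposition with the dual map φ*: F* → M* is injective. -/
import Mathlib


open Module LinearMap

/-- A linear map `φ : M → F` is *versal* if every linear map from `M` into a finitely
generated free module factors through `φ`. -/
def IsVersal (A : Type) [CommRing A] {M F : Type} [AddCommGroup M] [Module A M]
    [AddCommGroup F] [Module A F] (φ : M →ₗ[A] F) : Prop :=
  ∀ (E : Type) [AddCommGroup E] [Module A E] [Module.Free A E] [Module.Finite A E]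
    (g : M →ₗ[A] E), ∃ h : F →ₗ[A] E, g = h ∘ₗ φ

open Module LinearMap TensorProduct


lemma dual_finite (A : Type) [CommRing A] [IsNoetherianRing A]
    (M : Type) [AddCommGroup M] [Module A M] [Module.Finite A M] :
    Module.Finite A (Module.Dual A M) := by
  obtain ⟨n, p, hp⟩ := Module.Finite.exists_fin' A M
  exact Module.Finite.of_injective p.dualMap (p.dualMap_injective_of_surjective hp)

lemma versal_iff_surj (A : Type) [CommRing A]
    (M F : Type) [AddCommGroup M] [Module A M]
    [AddCommGroup F] [Module A F]
    (φ : M →ₗ[A] F) :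
    IsVersal A φ ↔ Function.Surjective φ.dualMap := by
  constructor
  · intro hv lam
    obtain ⟨h, hh⟩ := hv A lam
    exact ⟨h, hh.symm⟩
  · intro hs E _ _ _ _ g
    classical
    let b := Module.Free.chooseBasis A E
    choose μ hμ using fun i => hs (b.coord i ∘ₗ g)
    refine ⟨∑ i, (μ i).smulRight (b i), ?_⟩
    ext m
    have h1 : ∀ i, μ i (φ m) = b.coord i (g m) := fun i =>
      DFunLike.congr_fun (hμ i) m
    simp only [coe_comp, Function.comp_apply, LinearMap.coe_sum, Finset.sum_apply,
      smulRight_apply, h1]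
    exact (b.sum_repr (g m)).symm


/-- The natural map `α_{M,P} : M ⊗ P → Hom(M*, P)`, `α(m ⊗ p)(λ) = λ(m) • p`. -/
noncomputable def alphaMap (A : Type) [CommRing A] (M P : Type) [AddCommGroup M]
    [Module A M] [AddCommGroup P] [Module A P] :
    M ⊗[A] P →ₗ[A] (Module.Dual A M →ₗ[A] P) :=
  (dualTensorHom A (Module.Dual A M) P) ∘ₗ
    (TensorProduct.map (Module.Dual.eval A M) LinearMap.id)

/-- `G_M(P)` is the image of `α_{M,P} : M ⊗ P → Hom(M*, P)`. -/
noncomputable def GFun (A : Type) [CommRing A] (M P : Type) [AddCommGroup M] [Module A M]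
    [AddCommGroup P] [Module A P] : Submodule A (Module.Dual A M →ₗ[A] P) :=
  LinearMap.range (alphaMap A M P)

/-- `φ : M → F` is versal iff for every finitely generated `P`, the map
`Hom(M*, P) → Hom(F*, P)` given by precomposition with `φ* : F* → M*` is injective. -/
theorem stmt12 (A : Type) [CommRing A] [IsNoetherianRing A]
    (M F : Type) [AddCommGroup M] [Module A M] [Module.Finite A M]
    [AddCommGroup F] [Module A F] [Module.Free A F] [Module.Finite A F]
    (φ : M →ₗ[A] F) :
    IsVersal A φ ↔
      ∀ (P : Type) [AddCommGroup P] [Module A P] [Module.Finite A P],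
        Function.Injective (LinearMap.lcomp A P φ.dualMap) := by

  rw [versal_iff_surj]
  constructor
  · intro hs P _ _ _ h h' e
    ext lam
    obtain ⟨μ, rfl⟩ := hs lam
    simpa using DFunLike.congr_fun e μ
  · intro hinj
    haveI := dual_finite A M
    set N := LinearMap.range φ.dualMap with hN
    haveI : Module.Finite A (Module.Dual A M ⧸ N) := Module.Finite.quotient A N
    have h0 : lcomp A (Module.Dual A M ⧸ N) φ.dualMap N.mkQ
        = lcomp A (Module.Dual A M ⧸ N) φ.dualMap 0 := by
      ext μ
      simp [N, Submodule.Quotient.mk_eq_zero]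
    have hq := hinj (Module.Dual A M ⧸ N) h0
    intro lam
    have : N.mkQ lam = 0 := by rw [hq]; rfl
    rwa [Submodule.mkQ_apply, Submodule.Quotient.mk_eq_zero] at this
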